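/- The subspaces {ℜ_n}_{n∈ℕ} form an ℕ-filtration of the Racah algebra ℜ: (i) ℜ = ⋃_{n∈ℕ} ℜ_n; (ii) ℜ_n ⊆ ℜ_{n+1} for all n ∈ ℕ; (iii) ℜ_m · ℜ_n = ℜ_{m+n} for all m, n ∈ ℕ, where ℜ_m · ℜ_n is the F-span of all products xy with x ∈ ℜ_m, y ∈ ℜ_n. In particular ℜ_n = (ℜ_1)^n for all n ∈ ℕ. -/
import Mathlib


noncomputable section

/-- Generators of the Racah algebra. -/
inductive RGen : Type
  | A | B | C | D

namespace Racah

variable (F : Type) [Field F]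

/-- The free algebra on the generators `A`, `B`, `C`, `D`. -/
abbrev FA := FreeAlgebra F RGen

def fA : FA F := FreeAlgebra.ι F RGen.A
def fB : FA F := FreeAlgebra.ι F RGen.B
def fC : FA F := FreeAlgebra.ι F RGen.C
def fD : FA F := FreeAlgebra.ι F RGen.D

/-- α = [A,D] + AC − BA in the free algebra. -/
def fAl : FA F := (fA F * fD F - fD F * fA F) + fA F * fC F - fB F * fA F
/-- β = [B,D] + BA − CB in the free algebra. -/
def fBe : FA F := (fB F * fD F - fD F * fB F) + fB F * fA F - fC F * fB F
/-- γ = [C,D] + CB − AC in the free algebra. -/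
def fGa : FA F := (fC F * fD F - fD F * fC F) + fC F * fB F - fA F * fC F

/-- The defining relations of the Racah algebra:
`[A,B] = [B,C] = [C,A] = 2D` and each of `α`, `β`, `γ` commutes with each of `A`, `B`, `C`, `D`. -/
inductive Rel : FA F → FA F → Prop
  | AB : Rel (fA F * fB F - fB F * fA F) (2 * fD F)
  | BC : Rel (fB F * fC F - fC F * fB F) (2 * fD F)
  | CA : Rel (fC F * fA F - fA F * fC F) (2 * fD F)
  | cen (c x : FA F) (hc : c = fAl F ∨ c = fBe F ∨ c = fGa F)
      (hx : x = fA F ∨ x = fB F ∨ x = fC F ∨ x = fD F) :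
      Rel (c * x) (x * c)

/-- The Racah algebra ℜ. -/
abbrev R := RingQuot (Rel F)

def A : R F := RingQuot.mkAlgHom F (Rel F) (fA F)
def B : R F := RingQuot.mkAlgHom F (Rel F) (fB F)
def C : R F := RingQuot.mkAlgHom F (Rel F) (fC F)
def D : R F := RingQuot.mkAlgHom F (Rel F) (fD F)

/-- α = [A,D] + AC − BA. -/
def al : R F := (A F * D F - D F * A F) + A F * C F - B F * A F
/-- β = [B,D] + BA − CB. -/
def be : R F := (B F * D F - D F * B F) + B F * A F - C F * B F
/-- γ = [C,D] + CB − AC. -/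
def ga : R F := (C F * D F - D F * C F) + C F * B F - A F * C F
/-- δ = A + B + C. -/
def de : R F := A F + B F + C F

end Racah

namespace Racah

variable (F : Type) [Field F]

/-- The monomial `A^i D^j B^k α^r δ^s β^t`. -/
def mon (i j k r s t : ℕ) : R F :=
  A F ^ i * D F ^ j * B F ^ k * al F ^ r * de F ^ s * be F ^ t

end Racah

namespace Racah

variable (F : Type) [Field F]

/-- The subspace ℜ_n of ℜ spanned by the monomials `A^i D^j B^k α^r δ^s β^t`
with `i + 2j + k + r + s + t ≤ n`. -/
def Rn (n : ℕ) : Submodule F (R F) :=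
  Submodule.span F
    {x : R F | ∃ i j k r s t : ℕ, i + 2 * j + k + r + s + t ≤ n ∧ x = mon F i j k r s t}

end Racah

namespace Racah

variable (F : Type) [Field F]

-- === aux ===
lemma mk_fAl : RingQuot.mkAlgHom F (Rel F) (fAl F) = al F := by
  simp [fAl, al, A, B, C, D, map_add, map_sub, map_mul]
lemma mk_fBe : RingQuot.mkAlgHom F (Rel F) (fBe F) = be F := by
  simp [fBe, be, A, B, C, D, map_add, map_sub, map_mul]

lemma relAB : A F * B F - B F * A F = 2 * D F := by
  have h := RingQuot.mkAlgHom_rel F (Rel.AB (F := F))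
  simpa [A, B, D, map_sub, map_mul, map_ofNat] using h
lemma relBC : B F * C F - C F * B F = 2 * D F := by
  have h := RingQuot.mkAlgHom_rel F (Rel.BC (F := F))
  simpa [B, C, D, map_sub, map_mul, map_ofNat] using h
lemma relCA : C F * A F - A F * C F = 2 * D F := by
  have h := RingQuot.mkAlgHom_rel F (Rel.CA (F := F))
  simpa [A, C, D, map_sub, map_mul, map_ofNat] using h

lemma cen_comm (c x : FA F) (hc : c = fAl F ∨ c = fBe F ∨ c = fGa F)
    (hx : x = fA F ∨ x = fB F ∨ x = fC F ∨ x = fD F) :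
    RingQuot.mkAlgHom F (Rel F) c * RingQuot.mkAlgHom F (Rel F) x
      = RingQuot.mkAlgHom F (Rel F) x * RingQuot.mkAlgHom F (Rel F) c := by
  have h := RingQuot.mkAlgHom_rel F (Rel.cen c x hc hx)
  simpa [map_mul] using h

lemma comm_al_A : Commute (al F) (A F) := by
  have := cen_comm F (fAl F) (fA F) (Or.inl rfl) (Or.inl rfl)
  rwa [mk_fAl] at this
lemma comm_al_B : Commute (al F) (B F) := by
  have := cen_comm F (fAl F) (fB F) (Or.inl rfl) (Or.inr (Or.inl rfl))
  rwa [mk_fAl] at this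
lemma comm_al_C : Commute (al F) (C F) := by
  have := cen_comm F (fAl F) (fC F) (Or.inl rfl) (Or.inr (Or.inr (Or.inl rfl)))
  rwa [mk_fAl] at this
lemma comm_al_D : Commute (al F) (D F) := by
  have := cen_comm F (fAl F) (fD F) (Or.inl rfl) (Or.inr (Or.inr (Or.inr rfl)))
  rwa [mk_fAl] at this
lemma comm_be_A : Commute (be F) (A F) := by
  have := cen_comm F (fBe F) (fA F) (Or.inr (Or.inl rfl)) (Or.inl rfl)
  rwa [mk_fBe] at this
lemma comm_be_B : Commute (be F) (B F) := by
  have := cen_comm F (fBe F) (fB F) (Or.inr (Or.inl rfl)) (Or.inr (Or.inl rfl))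
  rwa [mk_fBe] at this
lemma comm_be_C : Commute (be F) (C F) := by
  have := cen_comm F (fBe F) (fC F) (Or.inr (Or.inl rfl)) (Or.inr (Or.inr (Or.inl rfl)))
  rwa [mk_fBe] at this
lemma comm_be_D : Commute (be F) (D F) := by
  have := cen_comm F (fBe F) (fD F) (Or.inr (Or.inl rfl)) (Or.inr (Or.inr (Or.inr rfl)))
  rwa [mk_fBe] at this
lemma hC : C F = de F - A F - B F := by unfold de; abel

lemma idBA : B F * A F = A F * B F - 2 * D F := by
  have h := relAB F
  calc B F * A F = A F * B F - (A F * B F - B F * A F) := by abel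
  _ = A F * B F - 2 * D F := by rw [h]

lemma comm_de_A : Commute (de F) (A F) := by
  show de F * A F = A F * de F
  have h : de F * A F - A F * de F
      = (C F * A F - A F * C F) - (A F * B F - B F * A F) := by
    unfold de; noncomm_ring
  rw [relCA, relAB, sub_self] at h
  rw [← sub_eq_zero]; exact h
lemma comm_de_B : Commute (de F) (B F) := by
  show de F * B F = B F * de F
  have h : de F * B F - B F * de F
      = (A F * B F - B F * A F) - (B F * C F - C F * B F) := by
    unfold de; noncomm_ring
  rw [relAB, relBC, sub_self] at h
  rw [← sub_eq_zero]; exact h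
lemma comm_de_C : Commute (de F) (C F) := by
  show de F * C F = C F * de F
  have h : de F * C F - C F * de F
      = (B F * C F - C F * B F) - (C F * A F - A F * C F) := by
    unfold de; noncomm_ring
  rw [relBC, relCA, sub_self] at h
  rw [← sub_eq_zero]; exact h

lemma two_cancel (h2 : (2 : F) ≠ 0) {x : R F} (h : x + x = 0) : x = 0 := by
  have h' : (2 : F) • x = 0 := by rw [two_smul]; exact h
  rcases smul_eq_zero.mp h' with h'' | h''
  · exact absurd h'' h2
  · exact h''

lemma comm_de_D (h2 : (2 : F) ≠ 0) : Commute (de F) (D F) := by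
  show de F * D F = D F * de F
  have hA := (comm_de_A F).eq
  have hB := (comm_de_B F).eq
  have key : de F * (A F * B F - B F * A F) = (A F * B F - B F * A F) * de F :=
    (((comm_de_A F).mul_right (comm_de_B F)).sub_right
      ((comm_de_B F).mul_right (comm_de_A F))).eq
  rw [relAB] at key
  rw [← sub_eq_zero]
  apply two_cancel F h2
  have : (de F * (2 * D F) - (2 * D F) * de F)
      = (de F * D F - D F * de F) + (de F * D F - D F * de F) := by noncomm_ring
  rw [← this, key, sub_self]

lemma comm_al_de : Commute (al F) (de F) := by
  unfold de
  exact ((comm_al_A F).add_right (comm_al_B F)).add_right (comm_al_C F)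
lemma comm_al_be : Commute (al F) (be F) := by
  unfold be
  exact ((((comm_al_B F).mul_right (comm_al_D F)).sub_right
    ((comm_al_D F).mul_right (comm_al_B F))).add_right
    ((comm_al_B F).mul_right (comm_al_A F))).sub_right
    ((comm_al_C F).mul_right (comm_al_B F))
lemma comm_de_be (h2 : (2 : F) ≠ 0) : Commute (de F) (be F) := by
  unfold be
  exact ((((comm_de_B F).mul_right (comm_de_D F h2)).sub_right
    ((comm_de_D F h2).mul_right (comm_de_B F))).add_right
    ((comm_de_B F).mul_right (comm_de_A F))).sub_right
    ((comm_de_C F).mul_right (comm_de_B F))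

/-- The word `A^i D^j B^k`. -/
def wrd (i j k : ℕ) : R F := A F ^ i * D F ^ j * B F ^ k
/-- The central monomial `α^r δ^s β^t`. -/
def cm (r s t : ℕ) : R F := al F ^ r * de F ^ s * be F ^ t

lemma wrd_i (i : ℕ) : wrd F (i + 1) 0 0 = wrd F i 0 0 * A F := by
  simp [wrd, pow_succ]
lemma wrd_j (i j : ℕ) : wrd F i (j + 1) 0 = wrd F i j 0 * D F := by
  simp [wrd, pow_succ, mul_assoc]
lemma wrd_k (i j k : ℕ) : wrd F i j (k + 1) = wrd F i j k * B F := by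
  simp [wrd, pow_succ, mul_assoc]

lemma comm_A_cm (r s t : ℕ) : Commute (A F) (cm F r s t) := by
  unfold cm
  exact (((comm_al_A F).symm.pow_right r).mul_right
    ((comm_de_A F).symm.pow_right s)).mul_right ((comm_be_A F).symm.pow_right t)
lemma comm_B_cm (r s t : ℕ) : Commute (B F) (cm F r s t) := by
  unfold cm
  exact (((comm_al_B F).symm.pow_right r).mul_right
    ((comm_de_B F).symm.pow_right s)).mul_right ((comm_be_B F).symm.pow_right t)
lemma comm_D_cm (h2 : (2 : F) ≠ 0) (r s t : ℕ) : Commute (D F) (cm F r s t) := by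
  unfold cm
  exact (((comm_al_D F).symm.pow_right r).mul_right
    ((comm_de_D F h2).symm.pow_right s)).mul_right ((comm_be_D F).symm.pow_right t)

lemma mon_eq (i j k r s t : ℕ) : mon F i j k r s t = wrd F i j k * cm F r s t := by
  simp [mon, wrd, cm, mul_assoc]

lemma mon_mem {i j k r s t n : ℕ} (h : i + 2 * j + k + r + s + t ≤ n) :
    mon F i j k r s t ∈ Rn F n :=
  Submodule.subset_span ⟨i, j, k, r, s, t, h, rfl⟩

lemma Rn_mono : Monotone (Rn F) := by
  intro m n h
  apply Submodule.span_mono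
  rintro x ⟨i, j, k, r, s, t, hw, rfl⟩
  exact ⟨i, j, k, r, s, t, hw.trans h, rfl⟩

lemma mon_mul_right {r s t : ℕ} (i j k : ℕ) {x : R F} (h : Commute x (cm F r s t)) :
    mon F i j k r s t * x = (wrd F i j k * x) * cm F r s t := by
  rw [mon_eq, mul_assoc, ← h.eq, ← mul_assoc]

lemma cm_mul_al (r s t : ℕ) : cm F r s t * al F = cm F (r + 1) s t := by
  unfold cm
  rw [mul_assoc, ← ((comm_al_be F).pow_right t).eq, ← mul_assoc,
      mul_assoc (al F ^ r), ← ((comm_al_de F).pow_right s).eq,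
      ← mul_assoc, ← pow_succ]
lemma cm_mul_de (h2 : (2 : F) ≠ 0) (r s t : ℕ) :
    cm F r s t * de F = cm F r (s + 1) t := by
  unfold cm
  rw [mul_assoc, ← ((comm_de_be F h2).pow_right t).eq, ← mul_assoc,
      mul_assoc (al F ^ r), ← pow_succ]
lemma cm_mul_be (r s t : ℕ) : cm F r s t * be F = cm F r s (t + 1) := by
  unfold cm
  rw [mul_assoc, ← pow_succ]

lemma mon_mul_al (i j k r s t : ℕ) :
    mon F i j k r s t * al F = mon F i j k (r + 1) s t := by
  rw [mon_eq, mul_assoc, cm_mul_al, ← mon_eq]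
lemma mon_mul_de (h2 : (2 : F) ≠ 0) (i j k r s t : ℕ) :
    mon F i j k r s t * de F = mon F i j k r (s + 1) t := by
  rw [mon_eq, mul_assoc, cm_mul_de F h2, ← mon_eq]
lemma mon_mul_be (i j k r s t : ℕ) :
    mon F i j k r s t * be F = mon F i j k r s (t + 1) := by
  rw [mon_eq, mul_assoc, cm_mul_be, ← mon_eq]
lemma mon_mul_B (i j k r s t : ℕ) :
    mon F i j k r s t * B F = mon F i j (k + 1) r s t := by
  rw [mon_mul_right F i j k (comm_B_cm F r s t), ← wrd_k, ← mon_eq]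

lemma mon_wrd (i j k : ℕ) : mon F i j k 0 0 0 = wrd F i j k := by
  simp [mon_eq, cm]
lemma wrd_mul_al (i j k : ℕ) : wrd F i j k * al F = mon F i j k 1 0 0 := by
  simp [mon_eq, cm]
lemma wrd_mul_be (i j k : ℕ) : wrd F i j k * be F = mon F i j k 0 0 1 := by
  simp [mon_eq, cm]

lemma idDA : D F * A F = A F * D F - al F + A F * de F - A F * A F
    - 2 * (A F * B F) + 2 * D F := by
  have h1 : al F = (A F * D F - D F * A F) + A F * C F - B F * A F := rfl
  rw [hC F, idBA F, mul_sub, mul_sub] at h1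
  rw [h1]; noncomm_ring

lemma idBD : B F * D F = D F * B F + be F - 2 * (A F * B F) + 2 * D F
    + B F * de F - B F * B F := by
  have h1 : be F = (B F * D F - D F * B F) + B F * A F - C F * B F := rfl
  rw [hC F, idBA F, sub_mul, sub_mul, (comm_de_B F).eq] at h1
  rw [h1]; noncomm_ring

lemma mul_B_mem {n : ℕ} {x : R F} (hx : x ∈ Rn F n) : x * B F ∈ Rn F (n + 1) := by
  refine Submodule.span_induction ?_ ?_ ?_ ?_ hx
  · rintro y ⟨i, j, k, r, s, t, hw, rfl⟩
    rw [mon_mul_B]; exact mon_mem F (by omega)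
  · rw [zero_mul]; exact zero_mem _
  · intro y z _ _ hy hz; rw [add_mul]; exact add_mem hy hz
  · intro c y _ hy; rw [smul_mul_assoc]; exact Submodule.smul_mem _ c hy

lemma mul_al_mem {n : ℕ} {x : R F} (hx : x ∈ Rn F n) : x * al F ∈ Rn F (n + 1) := by
  refine Submodule.span_induction ?_ ?_ ?_ ?_ hx
  · rintro y ⟨i, j, k, r, s, t, hw, rfl⟩
    rw [mon_mul_al]; exact mon_mem F (by omega)
  · rw [zero_mul]; exact zero_mem _
  · intro y z _ _ hy hz; rw [add_mul]; exact add_mem hy hz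
  · intro c y _ hy; rw [smul_mul_assoc]; exact Submodule.smul_mem _ c hy

lemma mul_de_mem (h2 : (2 : F) ≠ 0) {n : ℕ} {x : R F} (hx : x ∈ Rn F n) :
    x * de F ∈ Rn F (n + 1) := by
  refine Submodule.span_induction ?_ ?_ ?_ ?_ hx
  · rintro y ⟨i, j, k, r, s, t, hw, rfl⟩
    rw [mon_mul_de F h2]; exact mon_mem F (by omega)
  · rw [zero_mul]; exact zero_mem _
  · intro y z _ _ hy hz; rw [add_mul]; exact add_mem hy hz
  · intro c y _ hy; rw [smul_mul_assoc]; exact Submodule.smul_mem _ c hy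

lemma mul_be_mem {n : ℕ} {x : R F} (hx : x ∈ Rn F n) : x * be F ∈ Rn F (n + 1) := by
  refine Submodule.span_induction ?_ ?_ ?_ ?_ hx
  · rintro y ⟨i, j, k, r, s, t, hw, rfl⟩
    rw [mon_mul_be]; exact mon_mem F (by omega)
  · rw [zero_mul]; exact zero_mem _
  · intro y z _ _ hy hz; rw [add_mul]; exact add_mem hy hz
  · intro c y _ hy; rw [smul_mul_assoc]; exact Submodule.smul_mem _ c hy

lemma mul_pow_al_mem {n : ℕ} {x : R F} (hx : x ∈ Rn F n) (r : ℕ) :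
    x * al F ^ r ∈ Rn F (n + r) := by
  induction r with
  | zero => simpa using hx
  | succ r ih => rw [pow_succ, ← mul_assoc, ← add_assoc]; exact mul_al_mem F ih

lemma mul_pow_de_mem (h2 : (2 : F) ≠ 0) {n : ℕ} {x : R F} (hx : x ∈ Rn F n) (s : ℕ) :
    x * de F ^ s ∈ Rn F (n + s) := by
  induction s with
  | zero => simpa using hx
  | succ s ih => rw [pow_succ, ← mul_assoc, ← add_assoc]; exact mul_de_mem F h2 ih

lemma mul_pow_be_mem {n : ℕ} {x : R F} (hx : x ∈ Rn F n) (t : ℕ) :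
    x * be F ^ t ∈ Rn F (n + t) := by
  induction t with
  | zero => simpa using hx
  | succ t ih => rw [pow_succ, ← mul_assoc, ← add_assoc]; exact mul_be_mem F ih

lemma mul_cm_mem (h2 : (2 : F) ≠ 0) {n : ℕ} {x : R F} (hx : x ∈ Rn F n) (r s t : ℕ) :
    x * cm F r s t ∈ Rn F (n + r + s + t) := by
  unfold cm
  rw [← mul_assoc, ← mul_assoc]
  exact mul_pow_be_mem F (mul_pow_de_mem F h2 (mul_pow_al_mem F hx r) s) t

lemma two_mul_mem {n : ℕ} {x : R F} (hx : x ∈ Rn F n) : 2 * x ∈ Rn F n := by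
  rw [two_mul]; exact add_mem hx hx

lemma mul_AD (h2 : (2 : F) ≠ 0) :
    ∀ u : ℕ, ∀ x ∈ Rn F u, x * A F ∈ Rn F (u + 1) ∧ x * D F ∈ Rn F (u + 2) := by
  intro u
  induction u using Nat.strong_induction_on with
  | _ u IH =>
    intro x hx
    refine Submodule.span_induction ?_ ?_ ?_ ?_ hx
    · rintro y ⟨i, j, k, r, s, t, hw, rfl⟩
      constructor
      · -- mon * A
        rw [mon_mul_right F i j k (comm_A_cm F r s t)]
        rcases k with _ | k
        · rcases j with _ | j
          · -- i 0 0
            rw [← wrd_i, ← mon_eq]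
            exact mon_mem F (by omega)
          · -- j+1, k=0
            have e1 : wrd F i (j + 1) 0 * A F
                = (wrd F i j 0 * A F) * D F - mon F i j 0 1 0 0
                  + (wrd F i j 0 * A F) * de F - (wrd F i j 0 * A F) * A F
                  - 2 * ((wrd F i j 0 * A F) * B F) + 2 * (wrd F i j 0 * D F) := by
              rw [wrd_j, mul_assoc, idDA, ← wrd_mul_al]
              noncomm_ring
              simp only [mul_smul_comm]; try abel
            have hz : wrd F i j 0 ∈ Rn F (i + 2 * j) :=
              mon_wrd F i j 0 ▸ mon_mem F (by omega)
            have hv1 : i + 2 * j < u := by omega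
            have hv2 : i + 2 * j + 1 < u := by omega
            have hA1 : wrd F i j 0 * A F ∈ Rn F (i + 2 * j + 1) :=
              (IH _ hv1 _ hz).1
            have m1 : (wrd F i j 0 * A F) * D F ∈ Rn F (i + 2 * j + 3) :=
              (IH _ hv2 _ hA1).2
            have m2 : mon F i j 0 1 0 0 ∈ Rn F (i + 2 * j + 3) :=
              mon_mem F (by omega)
            have m3 : (wrd F i j 0 * A F) * de F ∈ Rn F (i + 2 * j + 3) :=
              Rn_mono F (by omega) (mul_de_mem F h2 hA1)
            have m4 : (wrd F i j 0 * A F) * A F ∈ Rn F (i + 2 * j + 3) :=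
              Rn_mono F (by omega) (IH _ hv2 _ hA1).1
            have m5 : (wrd F i j 0 * A F) * B F ∈ Rn F (i + 2 * j + 3) :=
              Rn_mono F (by omega) (mul_B_mem F hA1)
            have m6 : wrd F i j 0 * D F ∈ Rn F (i + 2 * j + 3) :=
              Rn_mono F (by omega) (IH _ hv1 _ hz).2
            have mm : wrd F i (j + 1) 0 * A F ∈ Rn F (i + 2 * j + 3) := by
              rw [e1]
              exact add_mem (sub_mem (sub_mem (add_mem (sub_mem m1 m2) m3) m4)
                (two_mul_mem F m5)) (two_mul_mem F m6)
            exact Rn_mono F (by omega) (mul_cm_mem F h2 mm r s t)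
        · -- k+1
          have e1 : wrd F i j (k + 1) * A F
              = (wrd F i j k * A F) * B F - 2 * (wrd F i j k * D F) := by
            rw [wrd_k, mul_assoc, idBA]
            noncomm_ring
            simp only [mul_smul_comm]; try abel
          have hz : wrd F i j k ∈ Rn F (i + 2 * j + k) :=
            mon_wrd F i j k ▸ mon_mem F (by omega)
          have hv1 : i + 2 * j + k < u := by omega
          have m1 : (wrd F i j k * A F) * B F ∈ Rn F (i + 2 * j + k + 2) :=
            mul_B_mem F (IH _ hv1 _ hz).1
          have m2 : wrd F i j k * D F ∈ Rn F (i + 2 * j + k + 2) :=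
            (IH _ hv1 _ hz).2
          have mm : wrd F i j (k + 1) * A F ∈ Rn F (i + 2 * j + k + 2) := by
            rw [e1]; exact sub_mem m1 (two_mul_mem F m2)
          exact Rn_mono F (by omega) (mul_cm_mem F h2 mm r s t)
      · -- mon * D
        rw [mon_mul_right F i j k (comm_D_cm F h2 r s t)]
        rcases k with _ | k
        · -- k = 0
          rw [← wrd_j, ← mon_eq]
          exact mon_mem F (by omega)
        · -- k+1
          have e1 : wrd F i j (k + 1) * D F
              = (wrd F i j k * D F) * B F + mon F i j k 0 0 1
                - 2 * ((wrd F i j k * A F) * B F) + 2 * (wrd F i j k * D F)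
                + (wrd F i j k * B F) * de F - (wrd F i j k * B F) * B F := by
            rw [wrd_k, mul_assoc, idBD, ← wrd_mul_be]
            noncomm_ring
            simp only [mul_smul_comm]; try abel
          have hz : wrd F i j k ∈ Rn F (i + 2 * j + k) :=
            mon_wrd F i j k ▸ mon_mem F (by omega)
          have hv1 : i + 2 * j + k < u := by omega
          have m1 : (wrd F i j k * D F) * B F ∈ Rn F (i + 2 * j + k + 3) :=
            mul_B_mem F (IH _ hv1 _ hz).2
          have m2 : mon F i j k 0 0 1 ∈ Rn F (i + 2 * j + k + 3) :=
            mon_mem F (by omega)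
          have m3 : (wrd F i j k * A F) * B F ∈ Rn F (i + 2 * j + k + 3) :=
            Rn_mono F (by omega) (mul_B_mem F (IH _ hv1 _ hz).1)
          have m4 : wrd F i j k * D F ∈ Rn F (i + 2 * j + k + 3) :=
            Rn_mono F (by omega) (IH _ hv1 _ hz).2
          have m5 : (wrd F i j k * B F) * de F ∈ Rn F (i + 2 * j + k + 3) :=
            Rn_mono F (by omega) (mul_de_mem F h2 (mul_B_mem F hz))
          have m6 : (wrd F i j k * B F) * B F ∈ Rn F (i + 2 * j + k + 3) :=
            Rn_mono F (by omega) (mul_B_mem F (mul_B_mem F hz))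
          have mm : wrd F i j (k + 1) * D F ∈ Rn F (i + 2 * j + k + 3) := by
            rw [e1]
            exact sub_mem (add_mem (add_mem (sub_mem (add_mem m1 m2)
              (two_mul_mem F m3)) (two_mul_mem F m4)) m5) m6
          exact Rn_mono F (by omega) (mul_cm_mem F h2 mm r s t)
    · constructor <;> · rw [zero_mul]; exact zero_mem _
    · intro y z _ _ hy hz
      exact ⟨by rw [add_mul]; exact add_mem hy.1 hz.1,
             by rw [add_mul]; exact add_mem hy.2 hz.2⟩
    · intro c y _ hy
      exact ⟨by rw [smul_mul_assoc]; exact Submodule.smul_mem _ c hy.1,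
             by rw [smul_mul_assoc]; exact Submodule.smul_mem _ c hy.2⟩

lemma mul_A_mem (h2 : (2 : F) ≠ 0) {n : ℕ} {x : R F} (hx : x ∈ Rn F n) :
    x * A F ∈ Rn F (n + 1) := (mul_AD F h2 n x hx).1
lemma mul_D_mem (h2 : (2 : F) ≠ 0) {n : ℕ} {x : R F} (hx : x ∈ Rn F n) :
    x * D F ∈ Rn F (n + 2) := (mul_AD F h2 n x hx).2

lemma mul_pow_A_mem (h2 : (2 : F) ≠ 0) {n : ℕ} {x : R F} (hx : x ∈ Rn F n) (p : ℕ) :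
    x * A F ^ p ∈ Rn F (n + p) := by
  induction p with
  | zero => simpa using hx
  | succ p ih =>
      rw [pow_succ, ← mul_assoc]
      exact Rn_mono F (by omega) (mul_A_mem F h2 ih)
lemma mul_pow_D_mem (h2 : (2 : F) ≠ 0) {n : ℕ} {x : R F} (hx : x ∈ Rn F n) (p : ℕ) :
    x * D F ^ p ∈ Rn F (n + 2 * p) := by
  induction p with
  | zero => simpa using hx
  | succ p ih =>
      rw [pow_succ, ← mul_assoc]
      exact Rn_mono F (by omega) (mul_D_mem F h2 ih)
lemma mul_pow_B_mem {n : ℕ} {x : R F} (hx : x ∈ Rn F n) (p : ℕ) :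
    x * B F ^ p ∈ Rn F (n + p) := by
  induction p with
  | zero => simpa using hx
  | succ p ih =>
      rw [pow_succ, ← mul_assoc]
      exact Rn_mono F (by omega) (mul_B_mem F ih)

lemma mul_mon_mem (h2 : (2 : F) ≠ 0) {n : ℕ} {x : R F} (hx : x ∈ Rn F n)
    (i j k r s t : ℕ) :
    x * mon F i j k r s t ∈ Rn F (n + (i + 2 * j + k + r + s + t)) := by
  unfold mon
  simp only [← mul_assoc]
  have h := mul_pow_be_mem F (mul_pow_de_mem F h2 (mul_pow_al_mem F
    (mul_pow_B_mem F (mul_pow_D_mem F h2 (mul_pow_A_mem F h2 hx i) j) k) r) s) t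
  exact Rn_mono F (by omega) h

lemma prod_le (h2 : (2 : F) ≠ 0) (m n : ℕ) : Rn F m * Rn F n ≤ Rn F (m + n) := by
  rw [Submodule.mul_le]
  intro x hx y hy
  refine Submodule.span_induction ?_ ?_ ?_ ?_ hy
  · rintro z ⟨i, j, k, r, s, t, hw, rfl⟩
    exact Rn_mono F (by omega) (mul_mon_mem F h2 hx i j k r s t)
  · rw [mul_zero]; exact zero_mem _
  · intro a b _ _ ha hb; rw [mul_add]; exact add_mem ha hb
  · intro c a _ ha; rw [mul_smul_comm]; exact Submodule.smul_mem _ c ha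

lemma mon_zero : mon F 0 0 0 0 0 0 = 1 := by simp [mon]

lemma one_mem_Rn (n : ℕ) : (1 : R F) ∈ Rn F n :=
  mon_zero F ▸ mon_mem F (Nat.zero_le n)
lemma A_mem : A F ∈ Rn F 1 := by
  have e : mon F 1 0 0 0 0 0 = A F := by simp [mon]
  exact e ▸ mon_mem F (by omega)
lemma B_mem : B F ∈ Rn F 1 := by
  have e : mon F 0 0 1 0 0 0 = B F := by simp [mon]
  exact e ▸ mon_mem F (by omega)
lemma D_mem : D F ∈ Rn F 2 := by
  have e : mon F 0 1 0 0 0 0 = D F := by simp [mon]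
  exact e ▸ mon_mem F (by omega)
lemma al_mem : al F ∈ Rn F 1 := by
  have e : mon F 0 0 0 1 0 0 = al F := by simp [mon]
  exact e ▸ mon_mem F (by omega)
lemma de_mem : de F ∈ Rn F 1 := by
  have e : mon F 0 0 0 0 1 0 = de F := by simp [mon]
  exact e ▸ mon_mem F (by omega)
lemma be_mem : be F ∈ Rn F 1 := by
  have e : mon F 0 0 0 0 0 1 = be F := by simp [mon]
  exact e ▸ mon_mem F (by omega)
lemma C_mem : C F ∈ Rn F 1 := by
  rw [hC]
  exact sub_mem (sub_mem (de_mem F) (A_mem F)) (B_mem F)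

lemma Rn_zero : Rn F 0 = 1 := by
  rw [Submodule.one_eq_span]
  apply le_antisymm
  · rw [Rn, Submodule.span_le]
    rintro x ⟨i, j, k, r, s, t, hw, rfl⟩
    have h : i = 0 ∧ j = 0 ∧ k = 0 ∧ r = 0 ∧ s = 0 ∧ t = 0 := by omega
    obtain ⟨rfl, rfl, rfl, rfl, rfl, rfl⟩ := h
    rw [mon_zero]
    exact Submodule.subset_span rfl
  · rw [Submodule.span_le]
    rintro x rfl
    exact one_mem_Rn F 0

lemma smul_two (x : R F) : (2 : F) • x = 2 * x := by
  rw [two_smul, two_mul]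

lemma Rn_succ_le (h2 : (2 : F) ≠ 0) (n : ℕ) : Rn F (n + 1) ≤ Rn F n * Rn F 1 := by
  rw [Rn, Submodule.span_le]
  rintro x ⟨i, j, k, r, s, t, hw, rfl⟩
  by_cases hw' : i + 2 * j + k + r + s + t ≤ n
  · have h := Submodule.mul_mem_mul (mon_mem F hw') (one_mem_Rn F 1)
    rwa [mul_one] at h
  · rcases t with _ | t
    · rcases s with _ | s
      · rcases r with _ | r
        · rcases k with _ | k
          · rcases j with _ | j
            · rcases i with _ | i
              · omega
              · have e : mon F (i + 1) 0 0 0 0 0 = mon F i 0 0 0 0 0 * A F := by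
                  rw [mon_wrd, mon_wrd, ← wrd_i]
                rw [e]
                exact Submodule.mul_mem_mul (mon_mem F (by omega)) (A_mem F)
            · -- D split
              set μ := mon F i j 0 0 0 0 with hμdef
              have hμD : mon F i (j + 1) 0 0 0 0 = μ * D F := by
                rw [hμdef, mon_wrd, mon_wrd, ← wrd_j]
              have h4 : (2 : F) • (μ * D F) = (μ * A F) * B F - (μ * B F) * A F := by
                rw [← mul_smul_comm, smul_two, ← relAB, mul_sub, ← mul_assoc, ← mul_assoc]
              have h5 : μ * D F = (2 : F)⁻¹ • ((μ * A F) * B F - (μ * B F) * A F) := by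
                rw [← h4, smul_smul, inv_mul_cancel₀ h2, one_smul]
              have hμ : μ ∈ Rn F (i + 2 * j) := mon_mem F (by omega)
              have hA1 : μ * A F ∈ Rn F n :=
                Rn_mono F (by omega) (mul_A_mem F h2 hμ)
              have hB1 : μ * B F ∈ Rn F n :=
                Rn_mono F (by omega) (mul_B_mem F hμ)
              rw [hμD, h5]
              exact Submodule.smul_mem _ _ (sub_mem
                (Submodule.mul_mem_mul hA1 (B_mem F))
                (Submodule.mul_mem_mul hB1 (A_mem F)))
          · rw [← mon_mul_B]
            exact Submodule.mul_mem_mul (mon_mem F (by omega)) (B_mem F)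
        · rw [← mon_mul_al]
          exact Submodule.mul_mem_mul (mon_mem F (by omega)) (al_mem F)
      · rw [← mon_mul_de F h2]
        exact Submodule.mul_mem_mul (mon_mem F (by omega)) (de_mem F)
    · rw [← mon_mul_be]
      exact Submodule.mul_mem_mul (mon_mem F (by omega)) (be_mem F)

lemma Rn_succ (h2 : (2 : F) ≠ 0) (n : ℕ) : Rn F (n + 1) = Rn F n * Rn F 1 :=
  le_antisymm (Rn_succ_le F h2 n) (prod_le F h2 n 1)

lemma Rn_pow (h2 : (2 : F) ≠ 0) : ∀ n : ℕ, Rn F n = Rn F 1 ^ n := by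
  intro n
  induction n with
  | zero => rw [pow_zero, Rn_zero]
  | succ n ih => rw [pow_succ, ← ih, ← Rn_succ F h2 n]

lemma mem_sup_Rn {y : R F} {n : ℕ} (h : y ∈ Rn F n) : y ∈ ⨆ m : ℕ, Rn F m :=
  (Submodule.mem_iSup_of_chain (⟨Rn F, Rn_mono F⟩ : ℕ →o Submodule F (R F)) y).mpr ⟨n, h⟩

end Racah

open Racah in
/-- the subspaces ℜ_n form an ℕ-filtration of ℜ:
(i) ℜ = ⋃ₙ ℜ_n; (ii) ℜ_n ⊆ ℜ_{n+1}; (iii) ℜ_m · ℜ_n = ℜ_{m+n}. Moreover ℜ_n = (ℜ_1)ⁿ. -/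
theorem stmt14 (F : Type) [Field F] (h2 : (2 : F) ≠ 0) :
    (⨆ n : ℕ, Rn F n) = (⊤ : Submodule F (Racah.R F)) ∧
    (∀ n : ℕ, Rn F n ≤ Rn F (n + 1)) ∧
    (∀ m n : ℕ, Rn F m * Rn F n = Rn F (m + n)) ∧
    (∀ n : ℕ, Rn F n = Rn F 1 ^ n) := by
  have h3 : ∀ m n : ℕ, Rn F m * Rn F n = Rn F (m + n) := by
    intro m n
    rw [Rn_pow F h2 m, Rn_pow F h2 n, Rn_pow F h2 (m + n), ← pow_add]
  refine ⟨?_, fun n => Rn_mono F (Nat.le_succ n), h3, fun n => Rn_pow F h2 n⟩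
  apply le_antisymm le_top
  intro x hx
  clear hx
  obtain ⟨f, rfl⟩ := RingQuot.mkAlgHom_surjective F (Rel F) x
  induction f using FreeAlgebra.induction with
  | grade0 c =>
      have e : RingQuot.mkAlgHom F (Rel F) (algebraMap F _ c) = c • (1 : R F) := by
        rw [AlgHom.commutes, Algebra.algebraMap_eq_smul_one]
      rw [e]
      exact mem_sup_Rn F (Submodule.smul_mem _ c (one_mem_Rn F 0))
  | grade1 g =>
      cases g with
      | A => exact mem_sup_Rn F (A_mem F)
      | B => exact mem_sup_Rn F (B_mem F)
      | C => exact mem_sup_Rn F (C_mem F)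
      | D => exact mem_sup_Rn F (D_mem F)
  | mul a b ha hb =>
      rw [map_mul]
      obtain ⟨m, ham⟩ := (Submodule.mem_iSup_of_chain
        (⟨Rn F, Rn_mono F⟩ : ℕ →o Submodule F (R F)) _).mp ha
      obtain ⟨n, hbn⟩ := (Submodule.mem_iSup_of_chain
        (⟨Rn F, Rn_mono F⟩ : ℕ →o Submodule F (R F)) _).mp hb
      exact mem_sup_Rn F ((h3 m n) ▸ Submodule.mul_mem_mul ham hbn)
  | add a b ha hb =>
      rw [map_add]
      exact add_mem ha hb
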